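/- arXiv:1012.2898 — 2 statements merged into one kernel-verified Lean document; each statement's English description precedes it below -/
import Mathlib

section
/- Let G be a closed, connected, self-adjoint, noncompact subgroup of GL(n,ℝ) that acts irreducibly on ℝⁿ, and suppose the Lie algebra 𝔊 of G is not semisimple. Then at least one of the following holds: (1) the zero vector lies in the closure of the orbit G(v) for every v ∈ ℝⁿ; (2) there exists a skew-symmetric matrix J with J² = −I such that the center of 𝔊 equals ℝ·J. -/
open Matrix Filter Topology

attribute [local instance 100] LieRing.ofAssociativeRing

noncomputable section

/-- The space M(n,ℝ) of n × n real matrices. -/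
abbrev Mat (n : ℕ) := Matrix (Fin n) (Fin n) ℝ

/-- ℝⁿ with its standard (Euclidean) inner product. -/
abbrev Euc (n : ℕ) := EuclideanSpace ℝ (Fin n)

/-- The action of a matrix on Euclidean space. -/
def act {n : ℕ} (X : Mat n) (v : Euc n) : Euc n := Matrix.toEuclideanLin X v

/-- The matrix exponential. -/
def mexp {n : ℕ} (X : Mat n) : Mat n := NormedSpace.exp X

/-- The canonical inner product ⟨A,B⟩ = trace (A Bᵀ) on M(n,ℝ). -/
def minner {n : ℕ} (A B : Mat n) : ℝ := Matrix.trace (A * Bᵀ)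

/-- The norm associated to the canonical inner product on M(n,ℝ). -/
def mnorm {n : ℕ} (A : Mat n) : ℝ := Real.sqrt (minner A A)

/-- The Lie algebra 𝔊 of a subgroup G of GL(n,ℝ):
𝔊 = {X ∈ M(n,ℝ) : exp(tX) ∈ G for all t ∈ ℝ}. -/
def lieAlgOf {n : ℕ} (G : Subgroup (GL (Fin n) ℝ)) : Set (Mat n) :=
  {X | ∀ t : ℝ, ∃ g ∈ G, (g : Mat n) = mexp (t • X)}

/-- G is self-adjoint: gᵀ ∈ G whenever g ∈ G. -/
def IsSelfAdjointSubgroup {n : ℕ} (G : Subgroup (GL (Fin n) ℝ)) : Prop :=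
  ∀ g ∈ G, ∃ h ∈ G, (h : Mat n) = (g : Mat n)ᵀ

/-- 𝔎 : the set of skew-symmetric elements of the Lie algebra of G. -/
def kSet {n : ℕ} (G : Subgroup (GL (Fin n) ℝ)) : Set (Mat n) :=
  {X ∈ lieAlgOf G | Xᵀ = -X}

/-- 𝔊_v : the stabilizer subalgebra {X ∈ 𝔊 : X(v) = 0}. -/
def stabAlg {n : ℕ} (G : Subgroup (GL (Fin n) ℝ)) (v : Euc n) : Set (Mat n) :=
  {X ∈ lieAlgOf G | act X v = 0}

/-- 𝔓̃_v : the orthogonal complement of 𝔎 + 𝔊_v in 𝔊 w.r.t. the canonical inner product. -/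
def tildeP {n : ℕ} (G : Subgroup (GL (Fin n) ℝ)) (v : Euc n) : Set (Mat n) :=
  {X ∈ lieAlgOf G | ∀ Y : Mat n, (Y ∈ kSet G ∨ Y ∈ stabAlg G v) → minner X Y = 0}

/-- `v` has a nonzero component in the μ-eigenspace of X. -/
def hasComp {n : ℕ} (X : Mat n) (v : Euc n) (μ : ℝ) : Prop :=
  Submodule.orthogonalProjectionOnto (Module.End.eigenspace (Matrix.toEuclideanLin X) μ) v ≠ 0

/-- λ_X(v) : the largest eigenvalue μ of X such that v has a nonzero component
in the μ-eigenspace of X. -/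
def lambdaOf {n : ℕ} (X : Mat n) (v : Euc n) : ℝ := sSup {μ : ℝ | hasComp X v μ}

/-- μ_X(v) : the smallest eigenvalue μ of X such that v has a nonzero component
in the μ-eigenspace of X. -/
def muOf {n : ℕ} (X : Mat n) (v : Euc n) : ℝ := sInf {μ : ℝ | hasComp X v μ}

/-- λ⁻(v) = inf {λ_X(v) : X ∈ 𝔓̃_v, |X| = 1}. -/
def lamMinus {n : ℕ} (G : Subgroup (GL (Fin n) ℝ)) (v : Euc n) : ℝ :=
  sInf {r : ℝ | ∃ X ∈ tildeP G v, mnorm X = 1 ∧ r = lambdaOf X v}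

/-- λ⁺(v) = sup {λ_X(v) : X ∈ 𝔓̃_v, |X| = 1}. -/
def lamPlus {n : ℕ} (G : Subgroup (GL (Fin n) ℝ)) (v : Euc n) : ℝ :=
  sSup {r : ℝ | ∃ X ∈ tildeP G v, mnorm X = 1 ∧ r = lambdaOf X v}

/-- The orbit G(v). -/
def orbitOf {n : ℕ} (G : Subgroup (GL (Fin n) ℝ)) (v : Euc n) : Set (Euc n) :=
  {w | ∃ g ∈ G, w = act (g : Mat n) v}

/-- v is a minimal vector for G : |g(v)| ≥ |v| for all g ∈ G. -/
def IsMinimalVec {n : ℕ} (G : Subgroup (GL (Fin n) ℝ)) (v : Euc n) : Prop :=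
  ∀ g ∈ G, ‖v‖ ≤ ‖act (g : Mat n) v‖

/-!
For closed `G`, `𝔊` is a Lie subalgebra of `M(n,ℝ)`, and near the identity `G` consists of
exponentials of elements of `𝔊`. Hence, `G` being connected, a matrix commuting with `𝔊`
commutes with `G`, and by Schur's lemma for the irreducible `G` a symmetric such matrix is scalar.
Since `𝔊` is closed under transposition, `B (Xᵀ, X) = ‖ad X‖²` for its Killing form `B`, so the
radical of `B` is central and non-semisimplicity yields a nonzero central `Z`.
If some central element has a nonzero symmetric part, that part is a scalar `μ • 1 ∈ 𝔊` with
`μ ≠ 0`, and `exp (t μ) • v ∈ G(v)` tends to `0`. Otherwise the centre is skew-symmetric: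
`Z * Z` is symmetric and central, so `Z * Z = μ • 1` with `μ < 0`, and `J = Z / √(-μ)` works,
since every central `X` makes `X * Z` scalar and hence `X ∈ ℝ Z`.
-/

open scoped InnerProductSpace

theorem Subgroup.le_of_isConnected_of_eventually_mem {M : Type*} [Group M] [TopologicalSpace M]
    [IsTopologicalGroup M] {G H : Subgroup M} (hG : IsConnected (G : Set M))
    (hH : ∀ᶠ g in 𝓝 (1 : M), g ∈ G → g ∈ H) : G ≤ H := by
  have : ConnectedSpace G := isConnected_iff_connectedSpace.mp hG
  have hnhds : ((H.subgroupOf G : Subgroup G) : Set G) ∈ 𝓝 (1 : G) := by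
    rw [nhds_subtype_eq_comap]
    exact ⟨_, hH, fun g hg => hg g.2⟩
  have hopen := (H.subgroupOf G).isOpen_of_mem_nhds hnhds
  have hclopen : IsClopen ((H.subgroupOf G : Subgroup G) : Set G) :=
    ⟨(H.subgroupOf G).isClosed_of_isOpen hopen, hopen⟩
  intro g hg
  have := hclopen.eq_univ ⟨1, (H.subgroupOf G).one_mem⟩ ▸ Set.mem_univ (⟨g, hg⟩ : G)
  exact Subgroup.mem_subgroupOf.mp this

theorem Submodule.mem_of_hasDerivAt {E : Type*} [NormedAddCommGroup E] [NormedSpace ℝ E]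
    (K : Submodule ℝ E) (hK : IsClosed (K : Set E)) {f : ℝ → E} {f' : E} {t₀ : ℝ}
    (hf : ∀ t, f t ∈ K) (hd : HasDerivAt f f' t₀) : f' ∈ K :=
  hK.mem_of_tendsto (hasDerivAt_iff_tendsto_slope.mp hd) <| .of_forall fun t =>
    K.smul_mem _ (K.sub_mem (hf t) (hf t₀))

theorem hasStrictFDerivAt_exp_mul_exp_sub {𝕂 𝔸 : Type*} [RCLike 𝕂] [NormedRing 𝔸]
    [NormedAlgebra 𝕂 𝔸] [CompleteSpace 𝔸] (p : 𝔸 →L[𝕂] 𝔸) :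
    HasStrictFDerivAt (fun A => NormedSpace.exp (p A) * NormedSpace.exp (A - p A))
      (1 : 𝔸 →L[𝕂] 𝔸) 0 := by
  have hexp : HasStrictFDerivAt (NormedSpace.exp : 𝔸 → 𝔸) (1 : 𝔸 →L[𝕂] 𝔸) (0 : 𝔸) :=
    hasStrictFDerivAt_exp_zero
  have h₁ := (map_zero p ▸ hexp).comp (0 : 𝔸) p.hasStrictFDerivAt
  have h₂ := (show (0 : 𝔸) - p 0 = 0 by simp) ▸ hexp |>.comp (0 : 𝔸)
    ((ContinuousLinearMap.id 𝕂 𝔸 - p).hasStrictFDerivAt)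
  refine (h₁.mul' h₂).congr_fderiv ?_
  ext A
  simp

theorem LinearMap.eq_zero_of_trace_adjoint_comp_self_eq_zero {E : Type*} [NormedAddCommGroup E]
    [InnerProductSpace ℝ E] [FiniteDimensional ℝ E] {f : E →ₗ[ℝ] E}
    (h : (f.adjoint ∘ₗ f).trace ℝ E = 0) : f = 0 := by
  set b := stdOrthonormalBasis ℝ E
  rw [LinearMap.trace_eq_sum_inner _ b] at h
  simp only [LinearMap.comp_apply, LinearMap.adjoint_inner_right] at h
  have hb : ∀ i, f (b i) = 0 := fun i => inner_self_eq_zero.mp <|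
    (Finset.sum_eq_zero_iff_of_nonneg fun i _ => real_inner_self_nonneg).mp h i (Finset.mem_univ i)
  exact b.toBasis.ext fun i => by simpa using hb i

theorem LinearMap.eq_zero_of_trace_comp_eq_zero {V E : Type*} [AddCommGroup V] [Module ℝ V]
    [NormedAddCommGroup E] [InnerProductSpace ℝ E] [FiniteDimensional ℝ E]
    (e : V →ₗ[ℝ] E) (he : Function.Injective e) {f g : Module.End ℝ V}
    (hfg : ∀ u v, ⟪e (g u), e v⟫_ℝ = ⟪e u, e (f v)⟫_ℝ) (htr : (g ∘ₗ f).trace ℝ V = 0) :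
    f = 0 := by
  set ε := LinearEquiv.ofInjective e he
  have hεe : ∀ u, (ε u : E) = e u := fun _ => rfl
  have hε : ∀ (h : Module.End ℝ V) u, (ε.conj h (ε u) : E) = e (h u) := fun h u => by
    simp [LinearEquiv.conj_apply, hεe]
  have hadj : ε.conj g = (ε.conj f).adjoint := by
    refine (LinearMap.eq_adjoint_iff _ _).mpr fun x y => ?_
    obtain ⟨u, rfl⟩ := ε.surjective x
    obtain ⟨v, rfl⟩ := ε.surjective y
    simpa only [Submodule.coe_inner, hε, hεe] using hfg u v
  have htr' : ((ε.conj f).adjoint ∘ₗ ε.conj f).trace ℝ _ = 0 := by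
    rw [← hadj, ← LinearEquiv.conj_comp, LinearMap.trace_conj', htr]
  simpa using (ε.conj f).eq_zero_of_trace_adjoint_comp_self_eq_zero htr'

theorem LinearMap.IsSymmetric.exists_eq_smul_id_of_eigenspace {E : Type*} [NormedAddCommGroup E]
    [InnerProductSpace ℝ E] [FiniteDimensional ℝ E] {T : E →ₗ[ℝ] E} (hT : T.IsSymmetric)
    (heig : ∀ μ : ℝ, Module.End.eigenspace T μ = ⊥ ∨ Module.End.eigenspace T μ = ⊤) :
    ∃ μ : ℝ, T = μ • LinearMap.id := by
  cases subsingleton_or_nontrivial E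
  · exact ⟨0, Subsingleton.elim _ _⟩
  obtain ⟨μ, hμ⟩ : ∃ μ, Module.End.HasEigenvalue T μ :=
    ⟨_, hT.hasEigenvalue_iSup_of_finiteDimensional⟩
  refine ⟨μ, LinearMap.ext fun x => ?_⟩
  have htop := (heig μ).resolve_left hμ
  simpa using Module.End.mem_eigenspace_iff.mp (htop ▸ Submodule.mem_top : x ∈ _)

section LieAlgebraOfClosedSubgroup

variable {n : ℕ} {G : Subgroup (GL (Fin n) ℝ)}

theorem mexp_zero : mexp (0 : Mat n) = 1 := NormedSpace.exp_zero

theorem mexp_mul_mexp_neg (A : Mat n) : mexp A * mexp (-A) = 1 := by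
  rw [mexp, mexp, ← Matrix.exp_add_of_commute _ _ (Commute.neg_right (Commute.refl A)),
    add_neg_cancel, NormedSpace.exp_zero]

theorem mexp_neg_mul_mexp (A : Mat n) : mexp (-A) * mexp A = 1 := by
  simpa using mexp_mul_mexp_neg (-A)

def expUnit (A : Mat n) : GL (Fin n) ℝ :=
  ⟨mexp A, mexp (-A), mexp_mul_mexp_neg A, mexp_neg_mul_mexp A⟩

@[simp] theorem val_expUnit (A : Mat n) : (expUnit A : Mat n) = mexp A := rfl

theorem expUnit_neg (A : Mat n) : expUnit (-A) = (expUnit A)⁻¹ :=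
  Units.ext rfl

theorem expUnit_nsmul (A : Mat n) (m : ℕ) : expUnit (m • A) = expUnit A ^ m :=
  Units.ext (Matrix.exp_nsmul m A)

theorem mem_lieAlgOf_iff {X : Mat n} : X ∈ lieAlgOf G ↔ ∀ t : ℝ, expUnit (t • X) ∈ G :=
  forall_congr' fun t =>
    ⟨fun ⟨g, hg, hval⟩ => (Units.ext hval : g = expUnit (t • X)) ▸ hg, fun h => ⟨_, h, rfl⟩⟩

theorem expUnit_mem {X : Mat n} (hX : X ∈ lieAlgOf G) : expUnit X ∈ G := by
  simpa using mem_lieAlgOf_iff.mp hX 1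

theorem smul_mem_lieAlgOf {X : Mat n} (c : ℝ) (hX : X ∈ lieAlgOf G) : c • X ∈ lieAlgOf G :=
  mem_lieAlgOf_iff.mpr fun t => smul_smul t c X ▸ mem_lieAlgOf_iff.mp hX (t * c)

theorem zero_mem_lieAlgOf : (0 : Mat n) ∈ lieAlgOf G :=
  fun _ => ⟨1, G.one_mem, by simp [mexp_zero]⟩

theorem transpose_mem_lieAlgOf (hsa : IsSelfAdjointSubgroup G) {X : Mat n}
    (hX : X ∈ lieAlgOf G) : Xᵀ ∈ lieAlgOf G := fun t => by
  obtain ⟨g, hg, hval⟩ := hX t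
  obtain ⟨h, hh, hvalh⟩ := hsa g hg
  exact ⟨h, hh, by rw [hvalh, hval, mexp, mexp, ← Matrix.exp_transpose, transpose_smul]⟩

theorem conj_mem_lieAlgOf {g : GL (Fin n) ℝ} (hg : g ∈ G) {X : Mat n} (hX : X ∈ lieAlgOf G) :
    (g : Mat n) * X * ((g⁻¹ : GL (Fin n) ℝ) : Mat n) ∈ lieAlgOf G := by
  refine mem_lieAlgOf_iff.mpr fun t => ?_
  have : expUnit (t • ((g : Mat n) * X * ((g⁻¹ : GL (Fin n) ℝ) : Mat n))) =
      g * expUnit (t • X) * g⁻¹ := Units.ext <| by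
    simpa [mexp, mul_smul_comm, smul_mul_assoc] using Matrix.exp_units_conj g (t • X)
  rw [this]
  exact G.mul_mem (G.mul_mem hg (mem_lieAlgOf_iff.mp hX t)) (G.inv_mem hg)

end LieAlgebraOfClosedSubgroup

section MatrixNorm

attribute [local instance] Matrix.linftyOpNormedRing Matrix.linftyOpNormedAlgebra

variable {n : ℕ} {G : Subgroup (GL (Fin n) ℝ)}

theorem mem_of_tendsto_val (hclosed : IsClosed (G : Set (GL (Fin n) ℝ))) {ι : Type*}
    {l : Filter ι} [l.NeBot] {f : ι → GL (Fin n) ℝ} (hf : ∀ᶠ i in l, f i ∈ G)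
    {u : GL (Fin n) ℝ} (hu : Tendsto (fun i => (f i : Mat n)) l (𝓝 u)) : u ∈ G :=
  hclosed.mem_of_tendsto (Units.isOpenEmbedding_val.tendsto_nhds_iff.mpr hu) hf

theorem continuous_mexp : Continuous (mexp : Mat n → Mat n) := NormedSpace.exp_continuous

/-- Covering `[0, t]` by `⌊t / s⌋` steps of length `s`, `exp (t • W)` is a limit of powers of the
`exp (s • W')` as `s → 0⁺` and `W' → W`. -/
theorem mem_lieAlgOf_of_tendsto (hclosed : IsClosed (G : Set (GL (Fin n) ℝ))) {ι : Type*}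
    {l : Filter ι} [l.NeBot] {s : ι → ℝ} {W : ι → Mat n} {W₀ : Mat n}
    (hs : ∀ᶠ i in l, 0 < s i) (hs0 : Tendsto s l (𝓝 0)) (hW : Tendsto W l (𝓝 W₀))
    (hmem : ∀ᶠ i in l, expUnit (s i • W i) ∈ G) : W₀ ∈ lieAlgOf G := by
  have hnonneg : ∀ t : ℝ, 0 ≤ t → expUnit (t • W₀) ∈ G := by
    intro t ht
    set m : ι → ℕ := fun i => ⌊t / s i⌋₊
    have hms : Tendsto (fun i => (m i : ℝ) * s i) l (𝓝 t) := by
      refine tendsto_of_tendsto_of_tendsto_of_le_of_le' (by simpa using hs0.const_sub t)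
        tendsto_const_nhds ?_ ?_ <;> filter_upwards [hs] with i hi
      · have := mul_lt_mul_of_pos_right (Nat.sub_one_lt_floor (t / s i)) hi
        rw [sub_mul, one_mul, div_mul_cancel₀ _ hi.ne'] at this
        linarith
      · simpa [div_mul_cancel₀ _ hi.ne'] using
          mul_le_mul_of_nonneg_right (Nat.floor_le (div_nonneg ht hi.le)) hi.le
    have hpow : Tendsto (fun i => ((expUnit (s i • W i) ^ m i : GL (Fin n) ℝ) : Mat n)) l
        (𝓝 (expUnit (t • W₀) : Mat n)) := by
      simp only [← expUnit_nsmul, val_expUnit, ← Nat.cast_smul_eq_nsmul ℝ, smul_smul]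
      exact (continuous_mexp.tendsto _).comp (hms.smul hW)
    exact mem_of_tendsto_val hclosed (hmem.mono fun i hi => pow_mem hi _) hpow
  refine mem_lieAlgOf_iff.mpr fun t => ?_
  rcases le_or_gt 0 t with ht | ht
  · exact hnonneg t ht
  · simpa [expUnit_neg] using G.inv_mem (hnonneg (-t) (by linarith))

theorem mem_lieAlgOf_of_hasDerivAt (hclosed : IsClosed (G : Set (GL (Fin n) ℝ)))
    {Z : ℝ → Mat n} {W : Mat n} (hZ0 : Z 0 = 0) (hd : HasDerivAt Z W 0)
    (hmem : ∀ᶠ t in 𝓝[>] 0, expUnit (Z t) ∈ G) : W ∈ lieAlgOf G := by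
  have hslope : Tendsto (fun t => t⁻¹ • Z t) (𝓝[>] 0) (𝓝 W) := by
    refine ((hasDerivAt_iff_tendsto_slope.mp hd).mono_left (nhdsGT_le_nhdsNE 0)).congr
      fun t => ?_
    simp [slope_def_module, hZ0]
  refine mem_lieAlgOf_of_tendsto (l := 𝓝[>] 0) (s := id) hclosed self_mem_nhdsWithin
    (tendsto_nhdsWithin_of_tendsto_nhds tendsto_id) hslope ?_
  filter_upwards [hmem, self_mem_nhdsWithin] with t ht htpos
  rwa [id, smul_inv_smul₀ (ne_of_gt htpos)]

theorem mexp_smul_one (r : ℝ) : mexp (r • (1 : Mat n)) = Real.exp r • (1 : Mat n) := by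
  rw [← Algebra.algebraMap_eq_smul_one, ← Algebra.algebraMap_eq_smul_one, Real.exp_eq_exp_ℝ, mexp,
    NormedSpace.algebraMap_exp_comm]
  rfl

theorem hasDerivAt_mexp_smul (A : Mat n) : HasDerivAt (fun t : ℝ => mexp (t • A)) A 0 := by
  have := hasDerivAt_exp_smul_const (𝕂 := ℝ) A 0
  simp only [zero_smul, NormedSpace.exp_zero, one_mul] at this
  exact this

/-- `t ↦ log (exp (t • X) * exp (t • Y))`, with `log` the local inverse of `exp` at `0`, is a curve
through `0` with velocity `X + Y` whose exponential stays in `G`. -/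
theorem add_mem_lieAlgOf (hclosed : IsClosed (G : Set (GL (Fin n) ℝ))) {X Y : Mat n}
    (hX : X ∈ lieAlgOf G) (hY : Y ∈ lieAlgOf G) : X + Y ∈ lieAlgOf G := by
  have hexp : HasStrictFDerivAt (NormedSpace.exp : Mat n → Mat n)
      ((ContinuousLinearEquiv.refl ℝ (Mat n) : Mat n ≃L[ℝ] Mat n) : Mat n →L[ℝ] Mat n) 0 :=
    hasStrictFDerivAt_exp_zero
  set log := hexp.localInverse
  have hlog1 : log 1 = 0 := by simpa using hexp.localInverse_apply_image
  have hlogd := hexp.to_localInverse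
  have hexplog := hexp.eventually_right_inverse
  rw [NormedSpace.exp_zero] at hlogd hexplog
  set γ : ℝ → Mat n := fun t => mexp (t • X) * mexp (t • Y)
  have hγ0 : γ 0 = 1 := by simp [γ, mexp_zero]
  have hγd : HasDerivAt γ (X + Y) 0 := by
    have := (hasDerivAt_mexp_smul X).mul (hasDerivAt_mexp_smul Y)
    simp only [zero_smul, mexp_zero, one_mul, mul_one] at this
    exact this
  have hZd : HasDerivAt (fun t => log (γ t)) (X + Y) 0 := by
    simpa using (hγ0 ▸ hlogd.hasFDerivAt).comp_hasDerivAt 0 hγd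
  refine mem_lieAlgOf_of_hasDerivAt hclosed (by simp [hγ0, hlog1]) hZd ?_
  have hγc : Tendsto γ (𝓝 0) (𝓝 1) := hγ0 ▸ hγd.continuousAt
  filter_upwards [nhdsWithin_le_nhds (hγc.eventually hexplog)] with t ht
  have : expUnit (log (γ t)) = expUnit (t • X) * expUnit (t • Y) := Units.ext ht
  rw [this]
  exact G.mul_mem (mem_lieAlgOf_iff.mp hX t) (mem_lieAlgOf_iff.mp hY t)

theorem isClosed_lieAlgOf (hclosed : IsClosed (G : Set (GL (Fin n) ℝ))) :
    IsClosed (lieAlgOf G) := by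
  have hcont : ∀ t : ℝ, Continuous fun X : Mat n => expUnit (t • X) := fun t =>
    Units.continuous_iff.mpr ⟨continuous_mexp.comp (continuous_const_smul t),
      continuous_mexp.comp (continuous_const_smul t).neg⟩
  have : lieAlgOf G = ⋂ t : ℝ, (fun X : Mat n => expUnit (t • X)) ⁻¹' G := by
    ext X
    simpa using mem_lieAlgOf_iff
  exact this ▸ isClosed_iInter fun t => hclosed.preimage (hcont t)

end MatrixNorm

-- From here on the norm of `Mat n` is only introduced inside proofs: as a local instance it
-- would make `Submodule ℝ (Mat n)` use the `Module` instance of `Matrix.linftyOpNormedAlgebra`.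
def lieAlgSubmodule {n : ℕ} {G : Subgroup (GL (Fin n) ℝ)}
    (hclosed : IsClosed (G : Set (GL (Fin n) ℝ))) : Submodule ℝ (Mat n) where
  carrier := lieAlgOf G
  add_mem' := add_mem_lieAlgOf hclosed
  zero_mem' := zero_mem_lieAlgOf
  smul_mem' c _ hX := smul_mem_lieAlgOf c hX

section LocalStructure

variable {n : ℕ} {G : Subgroup (GL (Fin n) ℝ)}

theorem lie_mem_lieAlgOf (hclosed : IsClosed (G : Set (GL (Fin n) ℝ))) {X Y : Mat n}
    (hX : X ∈ lieAlgOf G) (hY : Y ∈ lieAlgOf G) : ⁅Y, X⁆ ∈ lieAlgOf G := by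
  let _ : NormedRing (Mat n) := Matrix.linftyOpNormedRing
  let _ : NormedAlgebra ℝ (Mat n) := Matrix.linftyOpNormedAlgebra
  have hmem : ∀ t : ℝ, mexp (t • Y) * X * mexp (t • -Y) ∈ lieAlgOf G := fun t => by
    simpa [← expUnit_neg] using conj_mem_lieAlgOf (mem_lieAlgOf_iff.mp hY t) hX
  have hd : HasDerivAt (fun t : ℝ => mexp (t • Y) * X * mexp (t • -Y)) ⁅Y, X⁆ 0 := by
    have := ((hasDerivAt_mexp_smul Y).mul_const X).mul (hasDerivAt_mexp_smul (-Y))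
    simp only [mexp_zero, zero_smul] at this
    refine this.congr_deriv ?_
    rw [Ring.lie_def]
    noncomm_ring
  exact (lieAlgSubmodule hclosed).mem_of_hasDerivAt (isClosed_lieAlgOf hclosed) hmem hd

def lieSubalgebraOf (hclosed : IsClosed (G : Set (GL (Fin n) ℝ))) : LieSubalgebra ℝ (Mat n) :=
  { lieAlgSubmodule hclosed with lie_mem' := fun hX hY => lie_mem_lieAlgOf hclosed hY hX }

/-- Otherwise the directions of such `Y` would accumulate at a unit vector lying both in the Lie
algebra and in `K`. -/
theorem eventually_eq_zero_of_expUnit_mem (hclosed : IsClosed (G : Set (GL (Fin n) ℝ)))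
    {K : Submodule ℝ (Mat n)} (hK : Disjoint (lieAlgSubmodule hclosed) K) :
    ∀ᶠ Y in 𝓝 (0 : Mat n), Y ∈ K → expUnit Y ∈ G → Y = 0 := by
  let _ : NormedRing (Mat n) := Matrix.linftyOpNormedRing
  let _ : NormedAlgebra ℝ (Mat n) := Matrix.linftyOpNormedAlgebra
  by_contra h
  set S := {Y : Mat n | Y ∈ K ∧ expUnit Y ∈ G ∧ Y ≠ 0}
  have : (𝓝[S] (0 : Mat n)).NeBot := by
    rw [Filter.not_eventually] at h
    simpa [nhdsWithin, Filter.frequently_iff_neBot, S, and_assoc] using h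
  set u := Ultrafilter.of (𝓝[S] (0 : Mat n))
  have huS : ∀ᶠ Y in (u : Filter (Mat n)), Y ∈ S := Ultrafilter.of_le _ self_mem_nhdsWithin
  have hu0 : Tendsto (fun Y : Mat n => ‖Y‖) u (𝓝 0) :=
    tendsto_norm_zero.mono_left ((Ultrafilter.of_le _).trans nhdsWithin_le_nhds)
  set d : Mat n → Mat n := fun Y => ‖Y‖⁻¹ • Y
  obtain ⟨V, hV, hdV⟩ := (isCompact_sphere (0 : Mat n) 1).ultrafilter_le_nhds (u.map d) <| by
    rw [Ultrafilter.coe_map, Filter.le_principal_iff, Filter.mem_map]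
    filter_upwards [huS] with Y hY
    simp [d, norm_smul, inv_mul_cancel₀ (norm_ne_zero_iff.mpr hY.2.2)]
  have hVlie : V ∈ lieAlgOf G := by
    refine mem_lieAlgOf_of_tendsto hclosed (s := fun Y => ‖Y‖) (huS.mono fun Y hY => ?_) hu0 hdV
      (huS.mono fun Y hY => ?_)
    · exact norm_pos_iff.mpr hY.2.2
    · simpa [d, smul_inv_smul₀ (norm_ne_zero_iff.mpr hY.2.2)] using hY.2.1
  have hVK : V ∈ K := (K.closed_of_finiteDimensional).mem_of_tendsto hdV
    (huS.mono fun Y hY => K.smul_mem _ hY.1)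
  have hV0 : V = 0 := Submodule.disjoint_def.mp hK V hVlie hVK
  simp [hV0] at hV

/-- With `p` a projection onto the Lie algebra, `A ↦ exp (p A) * exp (A - p A)` is a local
diffeomorphism at `0`; its second factor is trapped by `eventually_eq_zero_of_expUnit_mem`. -/
theorem eventually_exists_mexp_eq (hclosed : IsClosed (G : Set (GL (Fin n) ℝ))) :
    ∀ᶠ g in 𝓝 (1 : GL (Fin n) ℝ), g ∈ G → ∃ X ∈ lieAlgOf G, mexp X = g := by
  let _ : NormedRing (Mat n) := Matrix.linftyOpNormedRing
  let _ : NormedAlgebra ℝ (Mat n) := Matrix.linftyOpNormedAlgebra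
  obtain ⟨K, hK⟩ := (lieAlgSubmodule hclosed).exists_isCompl
  set p : Mat n →L[ℝ] Mat n :=
    LinearMap.toContinuousLinearMap ((lieAlgSubmodule hclosed).projection K hK)
  have hp : ∀ A, p A ∈ lieAlgOf G := fun A => Submodule.projection_apply_mem hK A
  have hq : ∀ A, A - p A ∈ K := fun A =>
    Submodule.projection_eq_self_sub_projection hK A ▸ Submodule.projection_apply_mem hK.symm A
  set F : Mat n → Mat n := fun A => mexp (p A) * mexp (A - p A)
  have hF : map F (𝓝 0) = 𝓝 1 := by
    have hd : HasStrictFDerivAt F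
        ((ContinuousLinearEquiv.refl ℝ (Mat n) : Mat n ≃L[ℝ] Mat n) : Mat n →L[ℝ] Mat n) 0 :=
      hasStrictFDerivAt_exp_mul_exp_sub p
    have hF0 : F 0 = 1 := by simp [F, mexp_zero]
    exact hF0 ▸ hd.map_nhds_eq_of_equiv
  have hsmall : ∀ᶠ A in 𝓝 (0 : Mat n), expUnit (A - p A) ∈ G → A - p A = 0 := by
    have hc : Tendsto (fun A => A - p A) (𝓝 0) (𝓝 0) :=
      (continuous_id.sub p.continuous).tendsto' 0 0 (by simp)
    exact (hc.eventually (eventually_eq_zero_of_expUnit_mem hclosed hK.disjoint)).mono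
      fun A hA => hA (hq A)
  have hval : Tendsto (fun g : GL (Fin n) ℝ => (g : Mat n)) (𝓝 1) (𝓝 1) := by
    simpa using Units.continuous_val.tendsto (1 : GL (Fin n) ℝ)
  filter_upwards [hval (hF ▸ image_mem_map hsmall)] with g ⟨A, hA, hFA⟩ hg
  have hexp : expUnit (A - p A) = (expUnit (p A))⁻¹ * g := Units.ext <| by
    simp [← expUnit_neg, ← hFA, F, ← mul_assoc, mexp_neg_mul_mexp]
  have hA0 := hA (hexp ▸ G.mul_mem (G.inv_mem (expUnit_mem (hp A))) hg)
  exact ⟨p A, hp A, by simpa [F, hA0, mexp_zero] using hFA⟩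

end LocalStructure

section Irreducible

variable {n : ℕ} {G : Subgroup (GL (Fin n) ℝ)}

theorem commute_of_forall_commute_lieAlgOf (hclosed : IsClosed (G : Set (GL (Fin n) ℝ)))
    (hconn : IsConnected (G : Set (GL (Fin n) ℝ))) {T : Mat n}
    (hT : ∀ X ∈ lieAlgOf G, Commute T X) {g : GL (Fin n) ℝ} (hg : g ∈ G) : Commute T g := by
  let H : Subgroup (GL (Fin n) ℝ) :=
    { carrier := {g | Commute T g}
      mul_mem' := Commute.mul_right
      one_mem' := Commute.one_right T
      inv_mem' := Commute.units_inv_right }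
  refine Subgroup.le_of_isConnected_of_eventually_mem (H := H) hconn ?_ hg
  filter_upwards [eventually_exists_mexp_eq hclosed] with g hexp hg
  obtain ⟨X, hX, hXg⟩ := hexp hg
  show Commute T g
  exact hXg ▸ (hT X hX).exp_right

theorem exists_eq_smul_one_of_forall_commute (hclosed : IsClosed (G : Set (GL (Fin n) ℝ)))
    (hconn : IsConnected (G : Set (GL (Fin n) ℝ)))
    (hirr : ∀ W : Submodule ℝ (Euc n),
      (∀ g ∈ G, ∀ w ∈ W, act ((g : GL (Fin n) ℝ) : Mat n) w ∈ W) → W = ⊥ ∨ W = ⊤)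
    {T : Mat n} (hsymm : Tᵀ = T) (hT : ∀ X ∈ lieAlgOf G, Commute T X) :
    ∃ μ : ℝ, T = μ • (1 : Mat n) := by
  have hTsymm : (Matrix.toEuclideanLin T).IsSymmetric := by
    rw [Matrix.isSymmetric_toEuclideanLin_iff, Matrix.IsHermitian,
      Matrix.conjTranspose_eq_transpose_of_trivial, hsymm]
  obtain ⟨μ, hμ⟩ := hTsymm.exists_eq_smul_id_of_eigenspace fun μ => hirr _ fun g hg w hw => by
    have hcomm := commute_of_forall_commute_lieAlgOf hclosed hconn hT hg
    rw [Module.End.mem_eigenspace_iff] at hw ⊢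
    simp only [act] at *
    rw [← LinearMap.comp_apply, ← Matrix.toLpLin_mul_same, hcomm.eq, Matrix.toLpLin_mul_same,
      LinearMap.comp_apply, hw, map_smul]
  exact ⟨μ, Matrix.toEuclideanLin.injective (by simpa using hμ)⟩

end Irreducible

section Killing

variable {n : ℕ}

def frobeniusToEuclidean (n : ℕ) : Mat n ≃ₗ[ℝ] EuclideanSpace ℝ (Fin n × Fin n) :=
  (LinearEquiv.curry ℝ ℝ (Fin n) (Fin n)).symm.trans (WithLp.linearEquiv 2 ℝ _).symm

theorem inner_frobeniusToEuclidean (A B : Mat n) :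
    ⟪frobeniusToEuclidean n A, frobeniusToEuclidean n B⟫_ℝ = Matrix.trace (A * Bᵀ) := by
  simp only [PiLp.inner_apply, RCLike.inner_apply, conj_trivial, Matrix.trace, Matrix.diag,
    Matrix.mul_apply, Matrix.transpose_apply, ← Finset.sum_product']
  exact Finset.sum_congr rfl fun i _ => mul_comm _ _

theorem inner_frobeniusToEuclidean_lie (X A B : Mat n) :
    ⟪frobeniusToEuclidean n ⁅X, A⁆, frobeniusToEuclidean n B⟫_ℝ =
      ⟪frobeniusToEuclidean n A, frobeniusToEuclidean n ⁅Xᵀ, B⁆⟫_ℝ := by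
  simp only [inner_frobeniusToEuclidean, Ring.lie_def, Matrix.transpose_sub, Matrix.transpose_mul,
    Matrix.transpose_transpose, Matrix.sub_mul, Matrix.mul_sub, Matrix.trace_sub, Matrix.mul_assoc]
  rw [Matrix.trace_mul_comm X, Matrix.mul_assoc]

/-- For the Killing form `B`, `B (Xᵀ, X) = trace ((ad X)† ∘ ad X)`, adjoints being taken for
`⟨A, B⟩ = trace (A * Bᵀ)`. -/
theorem lie_eq_zero_of_killingForm_eq_zero {H : LieSubalgebra ℝ (Mat n)}
    (hH : ∀ X ∈ H, Xᵀ ∈ H) {x : H} (hx : ∀ y, killingForm ℝ H x y = 0) (y : H) : ⁅x, y⁆ = 0 := by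
  let xT : H := ⟨(x : Mat n)ᵀ, hH _ x.2⟩
  let e : H →ₗ[ℝ] EuclideanSpace ℝ (Fin n × Fin n) :=
    (frobeniusToEuclidean n : Mat n →ₗ[ℝ] _) ∘ₗ (H.incl : H →ₗ[ℝ] Mat n)
  have he : Function.Injective e :=
    (frobeniusToEuclidean n).injective.comp Subtype.val_injective
  have hadx : LieAlgebra.ad ℝ H x = 0 := by
    refine LinearMap.eq_zero_of_trace_comp_eq_zero e he (g := LieAlgebra.ad ℝ H xT)
      (fun u v => ?_) ?_
    · simpa [e] using inner_frobeniusToEuclidean_lie (x : Mat n)ᵀ u v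
    · rw [← killingForm_apply_apply, LieModule.traceForm_comm, hx]
  simpa using LinearMap.congr_fun hadx y

end Killing

section Center

variable {n : ℕ} {G : Subgroup (GL (Fin n) ℝ)}

def lieCenter (G : Subgroup (GL (Fin n) ℝ)) : Set (Mat n) :=
  {X | X ∈ lieAlgOf G ∧ ∀ Y ∈ lieAlgOf G, ⁅X, Y⁆ = 0}

theorem commute_of_mem_lieCenter {X : Mat n} (hX : X ∈ lieCenter G) {Y : Mat n}
    (hY : Y ∈ lieAlgOf G) : Commute X Y :=
  commute_iff_lie_eq.mpr (hX.2 Y hY)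

theorem exists_ne_zero_mem_lieCenter (hclosed : IsClosed (G : Set (GL (Fin n) ℝ)))
    (hsa : IsSelfAdjointSubgroup G)
    (hnss : ∀ H : LieSubalgebra ℝ (Mat n), (H : Set (Mat n)) = lieAlgOf G →
      ¬ (killingForm ℝ H).Nondegenerate) :
    ∃ Z ∈ lieCenter G, Z ≠ 0 := by
  have hdeg := hnss (lieSubalgebraOf hclosed) rfl
  rw [LinearMap.BilinForm.Nondegenerate,
    (LieModule.traceForm_isSymm ℝ _ _).isRefl.nondegenerate_iff_separatingLeft,
    LinearMap.SeparatingLeft] at hdeg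
  push Not at hdeg
  obtain ⟨x, hx, hx0⟩ := hdeg
  refine ⟨x, ⟨x.2, fun Y hY => ?_⟩, fun h => hx0 (Subtype.ext h)⟩
  have := lie_eq_zero_of_killingForm_eq_zero (fun X hX => transpose_mem_lieAlgOf hsa hX) hx
    ⟨Y, hY⟩
  simpa using congrArg Subtype.val this

theorem transpose_mem_lieCenter (hsa : IsSelfAdjointSubgroup G) {X : Mat n}
    (hX : X ∈ lieCenter G) : Xᵀ ∈ lieCenter G := by
  refine ⟨transpose_mem_lieAlgOf hsa hX.1, fun Y hY => ?_⟩
  have := congrArg Matrix.transpose (commute_of_mem_lieCenter hX (transpose_mem_lieAlgOf hsa hY)).eq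
  simp only [Matrix.transpose_mul, Matrix.transpose_transpose] at this
  rw [Ring.lie_def, this, sub_self]

theorem add_mem_lieCenter (hclosed : IsClosed (G : Set (GL (Fin n) ℝ))) {X Y : Mat n}
    (hX : X ∈ lieCenter G) (hY : Y ∈ lieCenter G) : X + Y ∈ lieCenter G :=
  ⟨add_mem_lieAlgOf hclosed hX.1 hY.1, fun Z hZ => by rw [add_lie, hX.2 Z hZ, hY.2 Z hZ, add_zero]⟩

theorem smul_mem_lieCenter {X : Mat n} (c : ℝ) (hX : X ∈ lieCenter G) : c • X ∈ lieCenter G :=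
  ⟨smul_mem_lieAlgOf c hX.1, fun Z hZ => by rw [smul_lie, hX.2 Z hZ, smul_zero]⟩

theorem zero_mem_closure_orbitOf {μ : ℝ} (hμ : μ ≠ 0) (h : μ • (1 : Mat n) ∈ lieAlgOf G)
    (v : Euc n) : (0 : Euc n) ∈ closure (orbitOf G v) := by
  have horbit : ∀ k : ℕ, Real.exp (-k) • v ∈ orbitOf G v := fun k => by
    obtain ⟨g, hg, hval⟩ := h (-k / μ)
    refine ⟨g, hg, ?_⟩
    rw [hval, smul_smul, div_mul_cancel₀ _ hμ, mexp_smul_one]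
    simp [act]
  have hlim : Tendsto (fun k : ℕ => Real.exp (-k) • v) atTop (𝓝 0) := by
    simpa using (Real.tendsto_exp_atBot.comp
      (tendsto_neg_atTop_atBot.comp tendsto_natCast_atTop_atTop)).smul_const v
  exact mem_closure_of_tendsto hlim (.of_forall horbit)

theorem transpose_eq_neg_of_mem_lieCenter (hclosed : IsClosed (G : Set (GL (Fin n) ℝ)))
    (hsa : IsSelfAdjointSubgroup G) (hsymm : ∀ S ∈ lieCenter G, Sᵀ = S → S = 0) {X : Mat n}
    (hX : X ∈ lieCenter G) : Xᵀ = -X :=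
  eq_neg_of_add_eq_zero_right <| hsymm _
    (add_mem_lieCenter hclosed hX (transpose_mem_lieCenter hsa hX))
    (by rw [Matrix.transpose_add, Matrix.transpose_transpose, add_comm])

theorem neg_of_mul_self_eq_smul_one {Z : Mat n} (hskew : Zᵀ = -Z) (hZ0 : Z ≠ 0) {μ : ℝ}
    (hμ : Z * Z = μ • (1 : Mat n)) : μ < 0 := by
  have hpos : 0 < Matrix.trace (Zᵀ * Z) := by
    have h := Matrix.trace_conjTranspose_mul_self_eq_zero_iff (A := Z)
    have h' := (Matrix.posSemidef_conjTranspose_mul_self Z).trace_nonneg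
    rw [Matrix.conjTranspose_eq_transpose_of_trivial] at h h'
    exact h'.lt_of_ne (Ne.symm (h.not.mpr hZ0))
  rw [hskew, neg_mul, hμ, Matrix.trace_neg, Matrix.trace_smul, Matrix.trace_one,
    Fintype.card_fin, smul_eq_mul, neg_pos] at hpos
  by_contra! h
  exact hpos.not_ge (mul_nonneg h (Nat.cast_nonneg n))

theorem exists_eq_smul_of_mem_lieCenter (hclosed : IsClosed (G : Set (GL (Fin n) ℝ)))
    (hconn : IsConnected (G : Set (GL (Fin n) ℝ)))
    (hirr : ∀ W : Submodule ℝ (Euc n),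
      (∀ g ∈ G, ∀ w ∈ W, act ((g : GL (Fin n) ℝ) : Mat n) w ∈ W) → W = ⊥ ∨ W = ⊤)
    (hskew : ∀ X ∈ lieCenter G, Xᵀ = -X) {Z : Mat n}
    (hZ : Z ∈ lieCenter G) {μ : ℝ} (hμ : Z * Z = μ • (1 : Mat n)) (hμ0 : μ ≠ 0) {X : Mat n}
    (hX : X ∈ lieCenter G) : ∃ c : ℝ, X = c • Z := by
  have hXZ : Commute X Z := commute_of_mem_lieCenter hX hZ.1
  have hsymm : (X * Z)ᵀ = X * Z := by
    rw [Matrix.transpose_mul, hskew Z hZ, hskew X hX, neg_mul_neg, hXZ.eq]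
  obtain ⟨ν, hν⟩ := exists_eq_smul_one_of_forall_commute hclosed hconn hirr hsymm fun Y hY =>
    (commute_of_mem_lieCenter hX hY).mul_left (commute_of_mem_lieCenter hZ hY)
  refine ⟨μ⁻¹ * ν, ?_⟩
  have : μ • X = ν • Z := by
    rw [← Matrix.mul_one X, ← Matrix.mul_smul, ← hμ, ← Matrix.mul_assoc, hν, Matrix.smul_mul,
      Matrix.one_mul]
  rw [mul_smul, ← this, smul_smul, inv_mul_cancel₀ hμ0, one_smul]

theorem exists_complexStructure_lieCenter_eq_span (hclosed : IsClosed (G : Set (GL (Fin n) ℝ)))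
    (hconn : IsConnected (G : Set (GL (Fin n) ℝ)))
    (hirr : ∀ W : Submodule ℝ (Euc n),
      (∀ g ∈ G, ∀ w ∈ W, act ((g : GL (Fin n) ℝ) : Mat n) w ∈ W) → W = ⊥ ∨ W = ⊤)
    (hskew : ∀ X ∈ lieCenter G, Xᵀ = -X) {Z : Mat n}
    (hZ : Z ∈ lieCenter G) (hZ0 : Z ≠ 0) :
    ∃ J : Mat n, Jᵀ = -J ∧ J * J = -1 ∧ lieCenter G = {X | ∃ c : ℝ, X = c • J} := by
  have hsymm : (Z * Z)ᵀ = Z * Z := by rw [Matrix.transpose_mul, hskew Z hZ, neg_mul_neg]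
  obtain ⟨μ, hμ⟩ := exists_eq_smul_one_of_forall_commute hclosed hconn hirr hsymm fun Y hY =>
    (commute_of_mem_lieCenter hZ hY).mul_left (commute_of_mem_lieCenter hZ hY)
  have hμneg := neg_of_mul_self_eq_smul_one (hskew Z hZ) hZ0 hμ
  have hsqrt : √(-μ) ≠ 0 := (Real.sqrt_pos.mpr (neg_pos.mpr hμneg)).ne'
  refine ⟨(√(-μ))⁻¹ • Z, by rw [Matrix.transpose_smul, hskew Z hZ, smul_neg], ?_, ?_⟩
  · rw [smul_mul_smul_comm, hμ, smul_smul, ← mul_inv, Real.mul_self_sqrt (neg_nonneg.mpr hμneg.le),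
      inv_neg, neg_mul, inv_mul_cancel₀ hμneg.ne, neg_smul, one_smul]
  · ext X
    refine ⟨fun hX => ?_, ?_⟩
    · obtain ⟨c, rfl⟩ := exists_eq_smul_of_mem_lieCenter hclosed hconn hirr hskew hZ hμ hμneg.ne hX
      exact ⟨c * √(-μ), by rw [smul_smul, mul_assoc, mul_inv_cancel₀ hsqrt, mul_one]⟩
    · rintro ⟨c, rfl⟩
      exact smul_mem_lieCenter c (smul_mem_lieCenter _ hZ)

end Center

theorem stmt3_general {n : ℕ} (G : Subgroup (GL (Fin n) ℝ))
    (hclosed : IsClosed (G : Set (GL (Fin n) ℝ)))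
    (hconn : IsConnected (G : Set (GL (Fin n) ℝ)))
    (hsa : IsSelfAdjointSubgroup G)
    (hirr : ∀ W : Submodule ℝ (Euc n),
      (∀ g ∈ G, ∀ w ∈ W, act ((g : GL (Fin n) ℝ) : Mat n) w ∈ W) → W = ⊥ ∨ W = ⊤)
    (hnss : ∀ H : LieSubalgebra ℝ (Mat n), (H : Set (Mat n)) = lieAlgOf G →
      ¬ (killingForm ℝ H).Nondegenerate) :
    (∀ v : Euc n, (0 : Euc n) ∈ closure (orbitOf G v))
    ∨ (∃ J : Mat n, Jᵀ = -J ∧ J * J = -1 ∧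
        {X : Mat n | X ∈ lieAlgOf G ∧ ∀ Y ∈ lieAlgOf G, ⁅X, Y⁆ = 0}
          = {X : Mat n | ∃ c : ℝ, X = c • J}) := by
  obtain ⟨Z, hZ, hZ0⟩ := exists_ne_zero_mem_lieCenter hclosed hsa hnss
  by_cases hsymm : ∀ S ∈ lieCenter G, Sᵀ = S → S = 0
  · right
    exact exists_complexStructure_lieCenter_eq_span hclosed hconn hirr
      (fun X hX => transpose_eq_neg_of_mem_lieCenter hclosed hsa hsymm hX) hZ hZ0
  · left
    push Not at hsymm
    obtain ⟨S, hS, hSsymm, hS0⟩ := hsymm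
    obtain ⟨μ, rfl⟩ := exists_eq_smul_one_of_forall_commute hclosed hconn hirr hSsymm fun Y hY =>
      commute_of_mem_lieCenter hS hY
    exact zero_mem_closure_orbitOf (left_ne_zero_of_smul hS0) hS.1

/-- Let G be a closed, connected, self-adjoint, noncompact subgroup of GL(n,ℝ)
acting irreducibly on ℝⁿ, whose Lie algebra 𝔊 is not semisimple. Then either
(1) 0 ∈ closure (G(v)) for every v ∈ ℝⁿ, or
(2) there is a skew-symmetric J with J² = -I such that the center of 𝔊 equals ℝ·J. -/
theorem stmt3 {n : ℕ} (G : Subgroup (GL (Fin n) ℝ))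
    (hclosed : IsClosed (G : Set (GL (Fin n) ℝ)))
    (hconn : IsConnected (G : Set (GL (Fin n) ℝ)))
    (hsa : IsSelfAdjointSubgroup G)
    (hnc : ¬ IsCompact (G : Set (GL (Fin n) ℝ)))
    (hirr : ∀ W : Submodule ℝ (Euc n),
      (∀ g ∈ G, ∀ w ∈ W, act ((g : GL (Fin n) ℝ) : Mat n) w ∈ W) → W = ⊥ ∨ W = ⊤)
    (hnss : ∀ H : LieSubalgebra ℝ (Mat n), (H : Set (Mat n)) = lieAlgOf G →
      ¬ (killingForm ℝ H).Nondegenerate) :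
    (∀ v : Euc n, (0 : Euc n) ∈ closure (orbitOf G v))
    ∨ (∃ J : Mat n, Jᵀ = -J ∧ J * J = -1 ∧
        {X : Mat n | X ∈ lieAlgOf G ∧ ∀ Y ∈ lieAlgOf G, ⁅X, Y⁆ = 0}
          = {X : Mat n | ∃ c : ℝ, X = c • J}) :=
  stmt3_general G hclosed hconn hsa hirr hnss
end
end

section
/- Let G be a closed, connected, self-adjoint, noncompact subgroup of GL(n,ℝ). Let v ∈ ℝⁿ be a minimal vector for G with |v| = 1, and let X be a symmetric matrix in the Lie algebra 𝔊 of G with X(v) ≠ 0. Then the function φ(s) = (log |exp(sX)(v)|)/s is monotone nondecreasing on (0,∞); equivalently its derivative satisfies φ'(s) ≥ 0 for all s > 0. -/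
open Matrix Filter Topology

noncomputable section

/-! For symmetric `X` and `u s = exp (s X) v`, the derivative of `log ‖u‖²` is
`2 ⟪u, X u⟫ / ‖u‖²`, and its second derivative is `4 (‖u‖² ‖X u‖² - ⟪u, X u⟫²) / ‖u‖⁴ ≥ 0`
by Cauchy–Schwarz. Hence `s ↦ log ‖exp (s X) v‖` is convex; it vanishes at `0` because
`‖v‖ = 1`, and the slope of a convex function from a point of its graph is nondecreasing. -/

open Set Real RealInnerProductSpace

theorem ConvexOn.monotoneOn_div_of_map_zero {f : ℝ → ℝ} (hf : ConvexOn ℝ univ f) (h0 : f 0 = 0) :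
    MonotoneOn (fun s => f s / s) (Ioi 0) := by
  have h := hf.monotoneOn_slope_gt (mem_univ 0)
  simp only [mem_univ, true_and, slope_fun_def_field, h0, sub_zero] at h
  exact h

section InnerProductSpace

variable {E : Type*} [NormedAddCommGroup E] [InnerProductSpace ℝ E]

theorem convexOn_log_norm_sq_of_hasDerivAt {T : E →L[ℝ] E} (hT : (T : E →ₗ[ℝ] E).IsSymmetric)
    {u : ℝ → E} (hu : ∀ s, HasDerivAt u (T (u s)) s) (hu0 : ∀ s, u s ≠ 0) :
    ConvexOn ℝ univ (fun s => log (‖u s‖ ^ 2)) := by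
  have hpos : ∀ s, 0 < ‖u s‖ ^ 2 := fun s => by positivity [norm_pos_iff.2 (hu0 s)]
  have hF : ∀ s, HasDerivAt (fun t => log (‖u t‖ ^ 2)) (2 * ⟪u s, T (u s)⟫ / ‖u s‖ ^ 2) s :=
    fun s => (hu s).norm_sq.log (hpos s).ne'
  have hN : ∀ s, HasDerivAt (fun t => 2 * ⟪u t, T (u t)⟫) (2 * (2 * ‖T (u s)‖ ^ 2)) s := by
    intro s
    have hTu := T.hasFDerivAt.comp_hasDerivAt s (hu s)
    refine (((hu s).inner ℝ hTu).const_mul 2).congr_deriv ?_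
    rw [show ⟪u s, T (T (u s))⟫ = ⟪T (u s), T (u s)⟫ from (hT (u s) (T (u s))).symm,
      Function.comp_apply, real_inner_self_eq_norm_sq]
    ring
  refine convexOn_of_hasDerivWithinAt2_nonneg convex_univ
    (fun s _ => (hF s).continuousAt.continuousWithinAt) (fun s _ => (hF s).hasDerivWithinAt)
    (fun s _ => ((hN s).div (hu s).norm_sq (hpos s).ne').hasDerivWithinAt)
    (fun s _ => div_nonneg ?_ (sq_nonneg _))
  have hCS : ⟪u s, T (u s)⟫ ^ 2 ≤ (‖u s‖ * ‖T (u s)‖) ^ 2 :=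
    sq_le_sq' (neg_le_of_abs_le (abs_real_inner_le_norm _ _)) (real_inner_le_norm _ _)
  nlinarith [hCS]

theorem convexOn_log_norm_of_hasDerivAt {T : E →L[ℝ] E} (hT : (T : E →ₗ[ℝ] E).IsSymmetric)
    {u : ℝ → E} (hu : ∀ s, HasDerivAt u (T (u s)) s) (hu0 : ∀ s, u s ≠ 0) :
    ConvexOn ℝ univ (fun s => log ‖u s‖) := by
  refine ((convexOn_log_norm_sq_of_hasDerivAt hT hu hu0).smul
    (by norm_num : (0 : ℝ) ≤ 1 / 2)).congr fun s _ => ?_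
  simp only [smul_eq_mul, Real.log_pow]
  ring

end InnerProductSpace

section Matrix

variable {n : ℕ}

lemma act_mexp_zero_smul (X : Mat n) (v : Euc n) : act (mexp ((0 : ℝ) • X)) v = v := by
  simp [act, mexp]

lemma act_mul (A B : Mat n) (v : Euc n) : act (A * B) v = act A (act B v) := by
  simp [act]

lemma act_mexp_ne_zero (M : Mat n) {v : Euc n} (hv : v ≠ 0) : act (mexp M) v ≠ 0 := by
  obtain ⟨U, hU⟩ := Matrix.isUnit_exp M
  intro h
  apply hv
  calc v = act (↑U⁻¹ * ↑U) v := by simp [act]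
    _ = 0 := by rw [act_mul, hU, ← mexp, h]; simp [act]

open scoped Matrix.Norms.L2Operator in
lemma hasDerivAt_act_mexp_smul (X : Mat n) (v : Euc n) (s : ℝ) :
    HasDerivAt (fun t : ℝ => act (mexp (t • X)) v) (act X (act (mexp (s • X)) v)) s := by
  let L : Mat n →ₗ[ℝ] Euc n := LinearMap.applyₗ v ∘ₗ Matrix.toEuclideanLin.toLinearMap
  rw [← act_mul]
  exact L.toContinuousLinearMap.hasFDerivAt.comp_hasDerivAt s
    (hasDerivAt_exp_smul_const' (𝕂 := ℝ) X s)

lemma isSymmetric_toEuclideanCLM {X : Mat n} (hX : Xᵀ = X) :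
    (Matrix.toEuclideanCLM (𝕜 := ℝ) X : Euc n →ₗ[ℝ] Euc n).IsSymmetric := by
  rw [Matrix.coe_toEuclideanCLM_eq_toEuclideanLin, Matrix.isSymmetric_toEuclideanLin_iff,
    Matrix.isHermitian_iff_isSymm]
  exact hX

end Matrix

theorem stmt16_general {n : ℕ}
    (v : Euc n) (hv : ‖v‖ = 1)
    (X : Mat n) (hXsym : Xᵀ = X) :
    MonotoneOn (fun s : ℝ => Real.log ‖act (mexp (s • X)) v‖ / s) (Set.Ioi (0 : ℝ)) := by
  have hv0 : v ≠ 0 := norm_ne_zero_iff.1 (hv ▸ one_ne_zero)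
  refine ConvexOn.monotoneOn_div_of_map_zero ?_ (by rw [act_mexp_zero_smul, hv, log_one])
  exact convexOn_log_norm_of_hasDerivAt (isSymmetric_toEuclideanCLM hXsym)
    (hasDerivAt_act_mexp_smul X v) (fun s => act_mexp_ne_zero _ hv0)

/-- Let G be a closed, connected, self-adjoint, noncompact subgroup of GL(n,ℝ),
v a minimal vector with |v| = 1, and X a symmetric element of the Lie algebra 𝔊 of G with
X(v) ≠ 0. Then φ(s) = (log |exp(sX)(v)|)/s is monotone nondecreasing on (0,∞). -/
theorem stmt16 {n : ℕ} (G : Subgroup (GL (Fin n) ℝ))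
    (hclosed : IsClosed (G : Set (GL (Fin n) ℝ)))
    (hconn : IsConnected (G : Set (GL (Fin n) ℝ)))
    (hsa : IsSelfAdjointSubgroup G)
    (hnc : ¬ IsCompact (G : Set (GL (Fin n) ℝ)))
    (v : Euc n) (hv : ‖v‖ = 1) (hmin : IsMinimalVec G v)
    (X : Mat n) (hXG : X ∈ lieAlgOf G) (hXsym : Xᵀ = X) (hXv : act X v ≠ 0) :
    MonotoneOn (fun s : ℝ => Real.log ‖act (mexp (s • X)) v‖ / s) (Set.Ioi (0 : ℝ)) :=
  stmt16_general v hv X hXsym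

end
end
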